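/- arXiv:2004.08954 — 2 statements merged into one kernel-verified Lean document; each statement's English description precedes it below -/
import Mathlib

section
/- Let p ≥ 3 be a prime, s ≥ 1, n ≥ 0 integers, and b an integer with 0 ≤ b < p(n+1) and p | b. If (p−1)·p^{s(n+1)/2−1} > n+1, then M_{p,s,n}(b) > 0. -/
open Polynomial Finset

/-- The polynomial `T_{p,s,n}(q) = ∏_{j=0}^n ∏_{k=1}^{p-1} (1 - q^{pj+k})^s`. -/
noncomputable def borweinPoly (p s n : ℕ) : Polynomial ℤ :=
  ∏ j ∈ Finset.range (n + 1), ∏ k ∈ Finset.Icc 1 (p - 1),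
    (1 - Polynomial.X ^ (p * j + k)) ^ s

/-- The coefficient `t_{i,p,s}` of `q^i` in `T_{p,s,n}(q)`. -/
noncomputable def borweinCoeff (p s n i : ℕ) : ℤ := (borweinPoly p s n).coeff i

/-- The degree `d_{p,s,n} = p(p-1)s(n+1)^2/2` of `T_{p,s,n}`. -/
def borweinDeg (p s n : ℕ) : ℕ := p * (p - 1) * s * (n + 1) ^ 2 / 2

/-- `M_{p,s,n}(b) = ∑_{ℓ ≥ 0} t_{b + ℓ·p(n+1), p, s}`, a finite sum since the
coefficients vanish beyond the degree `d_{p,s,n}`. -/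
noncomputable def borweinM (p s n b : ℕ) : ℤ :=
  ∑ l ∈ Finset.range (borweinDeg p s n + 1), borweinCoeff p s n (b + l * (p * (n + 1)))

/-
Filter the coefficients of `T = T_{p,s,n}` in the class of `b` modulo `N = p(n+1)` with the `N`-th
roots of unity: `N · M(b) = ∑_{η^N = 1} η^{-b} T(η)`. Writing `T(η)` as
`(∏_{k=1}^{p-1} ∏_{j=0}^{n} (1 - η^k (η^p)^j))^s` and using `∏_{j<e} (1 - x ξ^j) = 1 - x^e` for a
primitive `e`-th root `ξ`, one finds: `T(η) = 0` when the order of `η` is prime to `p`, and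
`T(η) = p^{s(n+1)/e}` when it is `p e`. The `p - 1` primitive `p`-th roots thus contribute
`(p-1) p^{s(n+1)}` (here `p ∣ b` makes `η^{-b} = 1`), while each of the other at most `N` terms
has modulus at most `p^{s(n+1)/2}`; the hypothesis says exactly that the main term wins.
-/

theorem Nat.dvd_add_sub_iff_mod_eq {N b : ℕ} (hb : b < N) (i : ℕ) :
    N ∣ i + (N - b) ↔ i % N = b := by
  have h1 : i + (N - b) = (i % N + (N - b)) + N * (i / N) := by
    have := Nat.mod_add_div i N; omega
  rw [h1, Nat.dvd_add_left (dvd_mul_right _ _)]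
  have := Nat.mod_lt i (by omega : 0 < N)
  constructor
  · rintro ⟨c, hc⟩
    obtain _ | _ | c := c
    · omega
    · omega
    · have := Nat.mul_le_mul_left N (by omega : 2 ≤ c + 1 + 1); omega
  · intro h; exact ⟨1, by omega⟩

theorem sum_range_mul_filter_mod_eq {M : Type*} [AddCommMonoid M] (f : ℕ → M) {N b : ℕ}
    (hb : b < N) (L : ℕ) :
    ∑ i ∈ range (L * N) with i % N = b, f i = ∑ l ∈ range L, f (b + l * N) := by
  have hN : 0 < N := by omega
  have himage : {i ∈ range (L * N) | i % N = b} = (range L).image (b + · * N) := by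
    ext i
    simp only [mem_filter, mem_range, mem_image]
    constructor
    · rintro ⟨hi, rfl⟩
      exact ⟨i / N, (Nat.div_lt_iff_lt_mul hN).mpr hi, Nat.mod_add_div' i N⟩
    · rintro ⟨l, hl, rfl⟩
      refine ⟨?_, by rw [Nat.add_mul_mod_self_right, Nat.mod_eq_of_lt hb]⟩
      have := Nat.mul_le_mul_right N (Nat.add_one_le_of_lt hl)
      rw [add_one_mul] at this
      omega
  rw [himage, sum_image fun l _ l' _ h => Nat.eq_of_mul_eq_mul_right hN (Nat.add_left_cancel h)]

namespace IsPrimitiveRoot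

variable {R : Type*} [CommRing R] [IsDomain R] {ζ : R} {N : ℕ}

theorem nthRootsFinset_one_eq_image [DecidableEq R] (hζ : IsPrimitiveRoot ζ N) :
    nthRootsFinset N (1 : R) = (range N).image (ζ ^ ·) := by
  rw [nthRootsFinset_def, hζ.nthRoots_eq (one_pow N)]
  simp [Finset.image, Multiset.toFinset]

theorem sum_nthRootsFinset_pow (hζ : IsPrimitiveRoot ζ N) (k : ℕ) :
    ∑ η ∈ nthRootsFinset N (1 : R), η ^ k = if N ∣ k then (N : R) else 0 := by
  classical
  rw [hζ.nthRootsFinset_one_eq_image, sum_image hζ.injOn_pow]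
  simp_rw [pow_right_comm ζ _ k]
  split_ifs with hk
  · simp [(hζ.pow_eq_one_iff_dvd k).mpr hk]
  · have hne : ζ ^ k - 1 ≠ 0 := sub_ne_zero.mpr fun h => hk ((hζ.pow_eq_one_iff_dvd k).mp h)
    refine (mul_eq_zero.mp ?_).resolve_right hne
    rw [geom_sum_mul, pow_right_comm, hζ.pow_eq_one, one_pow, sub_self]

-- On `N`-th roots of unity, `η ^ (N - b) = η⁻¹ ^ b`.
theorem sum_nthRootsFinset_pow_mul_eval (hζ : IsPrimitiveRoot ζ N) {P : R[X]} {D : ℕ}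
    (hD : P.natDegree < D) {b : ℕ} (hb : b < N) :
    ∑ η ∈ nthRootsFinset N (1 : R), η ^ (N - b) * P.eval η =
      N * ∑ i ∈ range D with i % N = b, P.coeff i := by
  simp_rw [eval_eq_sum_range' hD, mul_sum, sum_filter]
  rw [sum_comm]
  refine sum_congr rfl fun i _ => ?_
  simp_rw [mul_left_comm _ (P.coeff i), ← pow_add, ← mul_sum, add_comm (N - b),
    hζ.sum_nthRootsFinset_pow, Nat.dvd_add_sub_iff_mod_eq hb]
  split_ifs <;> ring

theorem prod_range_one_sub_mul_pow (hζ : IsPrimitiveRoot ζ N) (hN : 0 < N) (x : R) :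
    ∏ j ∈ range N, (1 - x * ζ ^ j) = 1 - x ^ N := by
  classical
  rw [← one_pow N, hζ.pow_sub_pow_eq_prod_sub_mul _ _ hN, hζ.nthRootsFinset_one_eq_image,
    prod_image hζ.injOn_pow, one_pow]
  simp_rw [mul_comm x]

theorem prod_range_mul_one_sub_mul_pow (hζ : IsPrimitiveRoot ζ N) (hN : 0 < N) (x : R)
    (c : ℕ) : ∏ j ∈ range (N * c), (1 - x * ζ ^ j) = (1 - x ^ N) ^ c := by
  induction c with
  | zero => simp
  | succ c ih =>
    rw [mul_add_one, prod_range_add, ih, pow_succ, ← hζ.prod_range_one_sub_mul_pow hN x]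
    simp_rw [pow_add, pow_mul, hζ.pow_eq_one, one_pow, one_mul]

theorem prod_Icc_one_sub_pow {p : ℕ} (hζ : IsPrimitiveRoot ζ p) (hp : 0 < p) :
    ∏ k ∈ Icc 1 (p - 1), (1 - ζ ^ k) = p := by
  obtain ⟨q, rfl⟩ : ∃ q, p = q + 1 := ⟨p - 1, by omega⟩
  rw [Nat.add_sub_cancel, ← Finset.Ico_add_one_right_eq_Icc, prod_Ico_eq_prod_range]
  simpa [add_comm 1] using hζ.prod_one_sub_pow_eq_order

end IsPrimitiveRoot

theorem aeval_borweinPoly {R : Type*} [CommRing R] (p s n : ℕ) (η : R) :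
    aeval η (borweinPoly p s n) =
      (∏ k ∈ Icc 1 (p - 1), ∏ j ∈ range (n + 1), (1 - η ^ k * (η ^ p) ^ j)) ^ s := by
  simp only [borweinPoly, map_prod, map_pow, map_sub, map_one, aeval_X]
  rw [prod_comm]
  simp_rw [prod_pow, ← pow_mul, ← pow_add, add_comm]

section

variable {R : Type*} [CommRing R] [IsDomain R] {p s n e : ℕ} {η : R}

theorem aeval_borweinPoly_of_isPrimitiveRoot_pow (hη : IsPrimitiveRoot (η ^ p) e)
    (he : e ∣ n + 1) :
    aeval η (borweinPoly p s n) =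
      (∏ k ∈ Icc 1 (p - 1), (1 - (η ^ e) ^ k)) ^ (s * ((n + 1) / e)) := by
  obtain ⟨c, hc⟩ := he
  have he0 : 0 < e := Nat.pos_of_ne_zero (by rintro rfl; omega)
  rw [aeval_borweinPoly, hc, Nat.mul_div_cancel_left c he0]
  simp_rw [hη.prod_range_mul_one_sub_mul_pow he0, prod_pow, ← pow_mul, mul_comm c s, mul_comm _ e]

theorem aeval_borweinPoly_eq_zero (hp : p.Prime) (hs : s ≠ 0) {d : ℕ} (hη : IsPrimitiveRoot η d)
    (hd : d ∣ p * (n + 1)) (hpd : ¬ p ∣ d) : aeval η (borweinPoly p s n) = 0 := by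
  have hcop : p.Coprime d := (Nat.Prime.coprime_iff_not_dvd hp).2 hpd
  have hdn : d ∣ n + 1 := hcop.symm.dvd_of_dvd_mul_left hd
  have hd0 : 0 < (n + 1) / d :=
    Nat.div_pos (Nat.le_of_dvd n.succ_pos hdn) (Nat.pos_of_dvd_of_pos hdn n.succ_pos)
  rw [aeval_borweinPoly_of_isPrimitiveRoot_pow (hη.pow_of_coprime p hcop) hdn, hη.pow_eq_one]
  have h1 : 1 ∈ Icc 1 (p - 1) := mem_Icc.mpr ⟨le_rfl, by have := hp.two_le; omega⟩
  rw [prod_eq_zero h1 (by rw [one_pow, sub_self]), zero_pow (Nat.mul_ne_zero hs hd0.ne')]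

theorem aeval_borweinPoly_of_isPrimitiveRoot_mul (hp : 0 < p) (hη : IsPrimitiveRoot η (p * e))
    (he : e ∣ n + 1) : aeval η (borweinPoly p s n) = (p : R) ^ (s * ((n + 1) / e)) := by
  have he0 : 0 < e := Nat.pos_of_ne_zero (by rintro rfl; simp at he)
  rw [aeval_borweinPoly_of_isPrimitiveRoot_pow (hη.pow (by positivity) rfl) he,
    (hη.pow (by positivity) (mul_comm p e)).prod_Icc_one_sub_pow hp]

end

theorem natDegree_borweinPoly_le (p s n : ℕ) :
    (borweinPoly p s n).natDegree ≤ (n + 1) * (p - 1) * s * (p * (n + 1)) := by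
  have hfactor : ∀ j ∈ range (n + 1), ∀ k ∈ Icc 1 (p - 1),
      ((1 - X ^ (p * j + k)) ^ s : ℤ[X]).natDegree ≤ s * (p * (n + 1)) := by
    intro j hj k hk
    simp only [mem_range, mem_Icc] at hj hk
    refine natDegree_pow_le.trans (Nat.mul_le_mul_left s ?_)
    refine (natDegree_sub_le _ _).trans ?_
    simp only [natDegree_one, natDegree_X_pow, zero_le, max_eq_right]
    have := Nat.mul_le_mul_left p (Nat.le_of_lt_succ hj)
    rw [mul_add_one]
    omega
  refine (natDegree_prod_le _ _).trans ((sum_le_card_nsmul _ _ ((p - 1) * (s * (p * (n + 1))))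
    fun j hj => (natDegree_prod_le _ _).trans ?_).trans ?_)
  · refine (sum_le_card_nsmul _ _ _ (hfactor j hj)).trans ?_
    simp
  · simp [mul_assoc]

theorem natDegree_borweinPoly_lt {p : ℕ} (hp : 2 ≤ p) (s n : ℕ) :
    (borweinPoly p s n).natDegree < (borweinDeg p s n + 1) * (p * (n + 1)) := by
  have hX : (n + 1) * (p - 1) * s ≤ borweinDeg p s n := by
    rw [borweinDeg, show p * (p - 1) * s * (n + 1) ^ 2 = (n + 1) * (p - 1) * s * (p * (n + 1)) by
      ring, Nat.le_div_iff_mul_le two_pos]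
    exact Nat.mul_le_mul_left _ (by nlinarith)
  calc (borweinPoly p s n).natDegree ≤ (n + 1) * (p - 1) * s * (p * (n + 1)) :=
        natDegree_borweinPoly_le p s n
    _ < (borweinDeg p s n + 1) * (p * (n + 1)) :=
        Nat.mul_lt_mul_of_pos_right (Nat.lt_succ_of_le hX) (by positivity)

theorem natCast_mul_borweinM_eq_sum {R : Type*} [CommRing R] [IsDomain R] {p s n b : ℕ}
    (hp : 2 ≤ p) (hb : b < p * (n + 1)) {ζ : R} (hζ : IsPrimitiveRoot ζ (p * (n + 1))) :
    ((p * (n + 1) : ℕ) : R) * borweinM p s n b =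
      ∑ η ∈ nthRootsFinset (p * (n + 1)) (1 : R),
        η ^ (p * (n + 1) - b) * aeval η (borweinPoly p s n) := by
  have hdeg : ((borweinPoly p s n).map (algebraMap ℤ R)).natDegree <
      (borweinDeg p s n + 1) * (p * (n + 1)) :=
    natDegree_map_le.trans_lt (natDegree_borweinPoly_lt hp s n)
  simp_rw [← eval_map_algebraMap]
  rw [hζ.sum_nthRootsFinset_pow_mul_eval hdeg hb, sum_range_mul_filter_mod_eq _ hb, borweinM]
  simp [borweinCoeff, coeff_map]

theorem pow_mul_aeval_borweinPoly_of_isPrimitiveRoot {R : Type*} [CommRing R] [IsDomain R]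
    {p s n b : ℕ} (hp : 0 < p) {η : R} (hη : IsPrimitiveRoot η p) (hpb : p ∣ b) :
    η ^ (p * (n + 1) - b) * aeval η (borweinPoly p s n) = (p : R) ^ (s * (n + 1)) := by
  rw [(hη.pow_eq_one_iff_dvd _).2 (Nat.dvd_sub (dvd_mul_right _ _) hpb), one_mul,
    aeval_borweinPoly_of_isPrimitiveRoot_mul hp (by rwa [mul_one]) (one_dvd _), Nat.div_one]

theorem norm_aeval_borweinPoly_le {p s n : ℕ} (hp : p.Prime) (hs : s ≠ 0) {η : ℂ}
    (hηN : η ^ (p * (n + 1)) = 1) (hη : ¬IsPrimitiveRoot η p) :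
    ‖aeval η (borweinPoly p s n)‖ ≤ (p : ℝ) ^ ((s : ℝ) * ((n : ℝ) + 1) / 2) := by
  have hd : orderOf η ∣ p * (n + 1) := orderOf_dvd_of_pow_eq_one hηN
  by_cases hpd : p ∣ orderOf η
  · obtain ⟨e, he⟩ := hpd
    have hen : e ∣ n + 1 := Nat.dvd_of_mul_dvd_mul_left hp.pos (he ▸ hd)
    have he2 : 2 ≤ e := by
      have he0 : e ≠ 0 := by rintro rfl; simp at hen
      have he1 : e ≠ 1 := by
        rintro rfl
        exact hη (mul_one p ▸ he ▸ IsPrimitiveRoot.orderOf η)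
      omega
    rw [aeval_borweinPoly_of_isPrimitiveRoot_mul hp.pos (he ▸ IsPrimitiveRoot.orderOf η) hen,
      norm_pow, Complex.norm_natCast, ← Real.rpow_natCast]
    refine Real.rpow_le_rpow_of_exponent_le (Nat.one_le_cast.mpr hp.one_le) ?_
    have h2 : 2 * ((n + 1) / e) ≤ n + 1 :=
      (Nat.mul_le_mul_right _ he2).trans (Nat.mul_div_le (n + 1) e)
    rw [le_div_iff₀ two_pos]
    exact_mod_cast (by nlinarith : s * ((n + 1) / e) * 2 ≤ s * (n + 1))
  · rw [aeval_borweinPoly_eq_zero hp hs (IsPrimitiveRoot.orderOf η) hd hpd, norm_zero]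
    positivity

theorem borweinM_lower_bound {p s n b : ℕ} (hp : p.Prime) (hs : s ≠ 0) (hb : b < p * (n + 1))
    (hpb : p ∣ b) :
    ((p : ℝ) - 1) * (p : ℝ) ^ (s * (n + 1)) -
        (p * (n + 1) : ℕ) * (p : ℝ) ^ ((s : ℝ) * ((n : ℝ) + 1) / 2) ≤
      (p * (n + 1) : ℕ) * (borweinM p s n b : ℝ) := by
  set N := p * (n + 1)
  set B : ℝ := (p : ℝ) ^ ((s : ℝ) * ((n : ℝ) + 1) / 2)
  have hN : 0 < N := Nat.mul_pos hp.pos n.succ_pos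
  set g : ℂ → ℂ := fun η => η ^ (N - b) * aeval η (borweinPoly p s n)
  have hsum : ((N : ℂ) * (borweinM p s n b : ℂ)) = ∑ η ∈ nthRootsFinset N (1 : ℂ), g η :=
    natCast_mul_borweinM_eq_sum hp.two_le hb (Complex.isPrimitiveRoot_exp N hN.ne')
  have hsub : primitiveRoots p ℂ ⊆ nthRootsFinset N (1 : ℂ) := fun η hη => by
    rw [mem_primitiveRoots hp.pos] at hη
    exact (mem_nthRootsFinset hN 1).mpr ((hη.pow_eq_one_iff_dvd N).mpr (dvd_mul_right p _))
  have hprim : ∑ η ∈ primitiveRoots p ℂ, g η = ((p : ℂ) - 1) * (p : ℂ) ^ (s * (n + 1)) := by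
    rw [sum_congr rfl fun η hη => pow_mul_aeval_borweinPoly_of_isPrimitiveRoot hp.pos
      ((mem_primitiveRoots hp.pos).mp hη) hpb, sum_const, Complex.card_primitiveRoots,
      Nat.totient_prime hp, nsmul_eq_mul, Nat.cast_sub hp.one_le, Nat.cast_one]
  have hrest : ‖∑ η ∈ nthRootsFinset N (1 : ℂ) \ primitiveRoots p ℂ, g η‖ ≤ N * B := by
    refine (norm_sum_le _ _).trans ((sum_le_card_nsmul _ _ B fun η hη => ?_).trans ?_)
    · rw [mem_sdiff, mem_nthRootsFinset hN, mem_primitiveRoots hp.pos] at hη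
      rw [norm_mul, norm_pow, Complex.norm_eq_one_of_pow_eq_one hη.1 hN.ne', one_pow, one_mul]
      exact norm_aeval_borweinPoly_le hp hs hη.1 hη.2
    · rw [nsmul_eq_mul]
      gcongr
      exact_mod_cast (card_le_card sdiff_subset).trans
          (Complex.isPrimitiveRoot_exp N hN.ne').card_nthRootsFinset.le
  rw [← sum_sdiff hsub, hprim] at hsum
  have hreal : (((N * borweinM p s n b : ℝ) - ((p : ℝ) - 1) * (p : ℝ) ^ (s * (n + 1)) : ℝ) : ℂ) =
      ∑ η ∈ nthRootsFinset N (1 : ℂ) \ primitiveRoots p ℂ, g η := by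
    push_cast; rw [hsum]; ring
  rw [← hreal, Complex.norm_real, Real.norm_eq_abs] at hrest
  linarith [neg_abs_le ((N * borweinM p s n b : ℝ) - ((p : ℝ) - 1) * (p : ℝ) ^ (s * (n + 1)))]

theorem stmt_1_general (p s n b : ℕ) (hp : p.Prime) (hs : 1 ≤ s)
    (hb : b < p * (n + 1)) (hpb : p ∣ b)
    (hgt : ((p : ℝ) - 1) * (p : ℝ) ^ (((s : ℝ) * ((n : ℝ) + 1)) / 2 - 1) > (n : ℝ) + 1) :
    0 < borweinM p s n b := by
  have hp0 : (0 : ℝ) < p := by exact_mod_cast hp.pos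
  set B : ℝ := (p : ℝ) ^ ((s : ℝ) * ((n : ℝ) + 1) / 2)
  have hB : 0 < B := by positivity
  have hgap : ((p * (n + 1) : ℕ) : ℝ) * B < ((p : ℝ) - 1) * (p : ℝ) ^ (s * (n + 1)) := by
    have hsq : (p : ℝ) ^ (s * (n + 1)) = B * B := by
      rw [← Real.rpow_add hp0, add_halves, ← Real.rpow_natCast]; push_cast; rfl
    rw [Real.rpow_sub_one hp0.ne'] at hgt
    rw [hsq, Nat.cast_mul]
    push_cast
    calc (p : ℝ) * (n + 1) * B = (n + 1) * (p * B) := by ring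
      _ < (p - 1) * (B / p) * (p * B) := mul_lt_mul_of_pos_right hgt (mul_pos hp0 hB)
      _ = (p - 1) * (B * B) := by field_simp
  have := borweinM_lower_bound hp (Nat.one_le_iff_ne_zero.mp hs) hb hpb
  have hpos : (0 : ℝ) < (p * (n + 1) : ℕ) * (borweinM p s n b : ℝ) := by linarith
  exact_mod_cast pos_of_mul_pos_right hpos (Nat.cast_nonneg _)

theorem stmt_1 (p s n b : ℕ) (hp : p.Prime) (hp3 : 3 ≤ p) (hs : 1 ≤ s)
    (hb : b < p * (n + 1)) (hpb : p ∣ b)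
    (hgt : ((p : ℝ) - 1) * (p : ℝ) ^ (((s : ℝ) * ((n : ℝ) + 1)) / 2 - 1) > (n : ℝ) + 1) :
    0 < borweinM p s n b :=
  stmt_1_general p s n b hp hs hb hpb hgt
end

section
/- For p = 5, s = 1: for every integer n ≥ 1 and every integer b with 0 ≤ b < 5(n+1) and 5 | b, one has M_{5,1,n}(b) > 0. -/
open Polynomial Finset

/-!
Write `m = n + 1`, `N = p m` and let `ω` be a primitive `N`-th root of unity in `ℂ`. Since
`T_{p,1,n}(q) = ∏_{x < N, p ∤ x} (1 - q^x)`, filtering by roots of unity gives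
`N · M(b) = ∑_{d < N} ω^{-bd} T(ω^d)`. If `β = ω^d` has order `h` and `g = N / h`, then
`T(β)` is `p^g` when `p ∣ h` (the product of `1 - β^r` over `r < h` prime to `p` is `p`, being
`∏_{0<r<h} (1 - β^r) = h` divided by the same product for `β^p`), and `0` otherwise. For `p ∣ b`
the indices `d = j m`, `0 < j < p`, contribute exactly `(p - 1) p^m`, and every other term is
bounded by `p^{m/2}` because `g` is then a proper divisor of `m`. For `p = 5` the main term wins:
`5m · 5^{m/2} < 4 · 5^m`.
-/

theorem Finset.sum_range_mul_eq_sum_sum {M : Type*} [AddCommMonoid M] (f : ℕ → M) (L N : ℕ) :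
    ∑ i ∈ range (L * N), f i = ∑ l ∈ range L, ∑ r ∈ range N, f (l * N + r) := by
  induction L with
  | zero => simp
  | succ L ih => rw [Nat.succ_mul, sum_range_add, ih, sum_range_succ]

theorem Function.Periodic.prod_range_mul {M : Type*} [CommMonoid M] {f : ℕ → M} {h : ℕ}
    (hf : Function.Periodic f h) (g : ℕ) :
    ∏ x ∈ range (g * h), f x = (∏ x ∈ range h, f x) ^ g := by
  induction g with
  | zero => simp
  | succ g ih =>
    rw [Nat.succ_mul, prod_range_add, ih, pow_succ]
    congr 1
    exact prod_congr rfl fun r _ => by rw [add_comm]; exact hf.nat_mul g r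

theorem Nat.le_div_two_of_dvd_of_ne {g m : ℕ} (hm : 0 < m) (hg : g ∣ m) (hne : g ≠ m) :
    g ≤ m / 2 := by
  obtain ⟨t, rfl⟩ := hg
  rw [Nat.le_div_iff_mul_le two_pos]
  refine Nat.mul_le_mul_left g ?_
  rcases t with _ | _ | t
  · simp at hm
  · simp at hne
  · omega

theorem pow_mul_sub_eq_one {M : Type*} [Monoid M] {ω : M} {p m b j : ℕ} (hω : ω ^ (p * m) = 1)
    (hpb : p ∣ b) : (ω ^ (j * m)) ^ (p * m - b) = 1 := by
  obtain ⟨c, rfl⟩ := hpb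
  rw [← Nat.mul_sub, ← pow_mul, show j * m * (p * (m - c)) = p * m * (j * (m - c)) by ring,
    pow_mul, hω, one_pow]

theorem IsPrimitiveRoot.pow_div_gcd {M : Type*} [CommMonoid M] {ω : M} {N : ℕ}
    (hω : IsPrimitiveRoot ω N) (hN : 0 < N) (d : ℕ) : IsPrimitiveRoot (ω ^ d) (N / N.gcd d) := by
  rw [hω.eq_orderOf, ← (hω.isOfFinOrder hN.ne').orderOf_pow]
  exact IsPrimitiveRoot.orderOf _

theorem Polynomial.eval_eq_sum_range_residue {S : Type*} [CommSemiring S] {P : S[X]} {N L : ℕ}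
    (hdeg : P.natDegree < L * N) {x : S} (hx : x ^ N = 1) :
    P.eval x = ∑ r ∈ range N, (∑ l ∈ range L, P.coeff (r + l * N)) * x ^ r := by
  rw [eval_eq_sum_range' hdeg, sum_range_mul_eq_sum_sum, sum_comm]
  refine sum_congr rfl fun r _ => ?_
  rw [sum_mul]
  refine sum_congr rfl fun l _ => ?_
  rw [add_comm, pow_add, pow_mul', hx, one_pow, mul_one]

section RootsOfUnity

variable {R : Type*} [CommRing R] [IsDomain R]

theorem IsPrimitiveRoot.prod_one_sub_pow_filter_ne_zero {μ : R} {n : ℕ}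
    (hμ : IsPrimitiveRoot μ n) (hn : 0 < n) :
    ∏ r ∈ (range n).filter (· ≠ 0), (1 - μ ^ r) = n := by
  obtain ⟨n, rfl⟩ := Nat.exists_eq_add_of_lt hn
  rw [prod_filter, zero_add, prod_range_succ']
  simpa using hμ.prod_one_sub_pow_eq_order

theorem IsPrimitiveRoot.geom_sum_pow_eq {μ : R} {N : ℕ} (hμ : IsPrimitiveRoot μ N) (j : ℕ) :
    ∑ d ∈ range N, (μ ^ j) ^ d = if N ∣ j then (N : R) else 0 := by
  split_ifs with h
  · simp [(hμ.pow_eq_one_iff_dvd j).mpr h]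
  · have hne : μ ^ j - 1 ≠ 0 := sub_ne_zero.mpr fun e => h ((hμ.pow_eq_one_iff_dvd j).mp e)
    have := mul_geom_sum (μ ^ j) N
    rw [← pow_mul, mul_comm j N, pow_mul, hμ.pow_eq_one, one_pow, sub_self] at this
    exact (mul_eq_zero.mp this).resolve_left hne

theorem IsPrimitiveRoot.sum_pow_sub_mul_sum {ω : R} {N b : ℕ} (hω : IsPrimitiveRoot ω N)
    (hb : b < N) (c : ℕ → R) :
    ∑ d ∈ range N, (ω ^ d) ^ (N - b) * ∑ r ∈ range N, c r * (ω ^ d) ^ r = N * c b := by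
  calc ∑ d ∈ range N, (ω ^ d) ^ (N - b) * ∑ r ∈ range N, c r * (ω ^ d) ^ r
      = ∑ r ∈ range N, c r * ∑ d ∈ range N, (ω ^ (N - b + r)) ^ d := by
        simp_rw [mul_sum]
        rw [sum_comm]
        refine sum_congr rfl fun r _ => sum_congr rfl fun d _ => ?_
        ring
    _ = ∑ r ∈ range N, if r = b then N * c b else 0 := by
        refine sum_congr rfl fun r hr => ?_
        rw [mem_range] at hr
        have hdvd : N ∣ N - b + r ↔ r = b :=
          ⟨fun h => by have := Nat.eq_of_dvd_of_lt_two_mul (by omega) h (by omega); omega,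
            by rintro rfl; exact ⟨1, by omega⟩⟩
        rw [hω.geom_sum_pow_eq, if_congr hdvd rfl rfl]
        split_ifs with h <;> [rw [h, mul_comm]; rw [mul_zero]]
    _ = N * c b := by rw [sum_ite_eq', if_pos (mem_range.mpr hb)]

theorem IsPrimitiveRoot.prod_one_sub_pow_filter_not_dvd [CharZero R] {μ : R} {h k : ℕ}
    (hμ : IsPrimitiveRoot μ h) (hh : 0 < h) (hk : k ∣ h) :
    ∏ r ∈ (range h).filter (¬ k ∣ ·), (1 - μ ^ r) = k := by
  obtain ⟨h', rfl⟩ := hk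
  have hh' : 0 < h' := Nat.pos_of_mul_pos_left hh
  have hk0 : 0 < k := Nat.pos_of_mul_pos_right hh
  have multiples : ∏ r ∈ (range (k * h')).filter (fun r => r ≠ 0 ∧ k ∣ r), (1 - μ ^ r) = h' := by
    rw [← (hμ.pow hh rfl).prod_one_sub_pow_filter_ne_zero hh']
    refine prod_nbij' (· / k) (k * ·) ?_ ?_ ?_ ?_ ?_ <;> simp only [mem_filter, mem_range]
    · rintro r ⟨hr, hr0, t, rfl⟩
      rw [Nat.mul_div_cancel_left t hk0]
      exact ⟨lt_of_mul_lt_mul_left hr hk0.le, by rintro rfl; simp at hr0⟩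
    · exact fun t ⟨ht, ht0⟩ => ⟨by gcongr, by positivity, dvd_mul_right k t⟩
    · rintro r ⟨-, -, t, rfl⟩
      rw [Nat.mul_div_cancel_left t hk0]
    · exact fun t _ => Nat.mul_div_cancel_left t hk0
    · rintro r ⟨-, -, t, rfl⟩
      rw [Nat.mul_div_cancel_left t hk0, pow_mul]
  have all := hμ.prod_one_sub_pow_filter_ne_zero hh
  rw [← prod_filter_mul_prod_filter_not _ (k ∣ ·), filter_filter, filter_filter, multiples,
    filter_congr (p := fun r => r ≠ 0 ∧ ¬ k ∣ r) (q := (¬ k ∣ ·))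
      fun r _ => ⟨And.right, fun hr => ⟨by rintro rfl; exact hr (dvd_zero k), hr⟩⟩,
    Nat.cast_mul, mul_comm (k : R)] at all
  exact mul_left_cancel₀ (Nat.cast_ne_zero.mpr hh'.ne') all

theorem IsPrimitiveRoot.prod_one_sub_pow_pow_filter_not_dvd [CharZero R] {ω : R} {k m : ℕ}
    (hω : IsPrimitiveRoot ω (k * m)) (hk : 0 < k) (hm : 0 < m) (d : ℕ) :
    ∏ x ∈ (range (k * m)).filter (¬ k ∣ ·), (1 - (ω ^ d) ^ x) =
      if (k * m).gcd d ∣ m then (k : R) ^ (k * m).gcd d else 0 := by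
  have hN : 0 < k * m := Nat.mul_pos hk hm
  set g := (k * m).gcd d
  set h := k * m / g
  have hg : 0 < g := Nat.gcd_pos_of_pos_left d hN
  have hgh : g * h = k * m := Nat.mul_div_cancel' (Nat.gcd_dvd_left _ _)
  have hβ : IsPrimitiveRoot (ω ^ d) h := hω.pow_div_gcd hN d
  split_ifs with hgm
  · obtain ⟨m', hm'⟩ := hgm
    have hkh : k ∣ h := ⟨m', Nat.eq_of_mul_eq_mul_left hg (by rw [hgh, hm']; ring)⟩
    have periodic : Function.Periodic (fun x => if ¬ k ∣ x then 1 - (ω ^ d) ^ x else 1) h := by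
      intro x
      simp only [pow_add, hβ.pow_eq_one, mul_one, Nat.dvd_add_left hkh]
    rw [prod_filter, ← hgh, periodic.prod_range_mul, ← prod_filter,
      hβ.prod_one_sub_pow_filter_not_dvd (Nat.pos_of_mul_pos_left (hgh ▸ hN)) hkh]
  · have hg1 : g ≠ 1 := fun h1 => hgm (h1 ▸ one_dvd m)
    refine prod_eq_zero (i := h) ?_ (by rw [hβ.pow_eq_one, sub_self])
    rw [mem_filter, mem_range]
    refine ⟨Nat.div_lt_self hN (by omega), fun ⟨t, ht⟩ => hgm ⟨t, ?_⟩⟩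
    apply Nat.eq_of_mul_eq_mul_left hk
    rw [← hgh, ht]; ring

theorem borweinPoly_one_eq_prod {p : ℕ} (hp : 0 < p) (n : ℕ) :
    borweinPoly p 1 n = ∏ x ∈ (range (p * (n + 1))).filter (¬ p ∣ ·), (1 - X ^ x) := by
  rw [borweinPoly, ← prod_product']
  refine prod_nbij' (fun jk => p * jk.1 + jk.2) (fun x => (x / p, x % p)) ?_ ?_ ?_ ?_ ?_ <;>
    simp only [mem_product, mem_range, mem_Icc, mem_filter, pow_one, Prod.forall]
  · intro j k ⟨hj, hk1, hkp⟩
    refine ⟨?_, (Nat.dvd_add_right (dvd_mul_right p j)).not.mpr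
      (Nat.not_dvd_of_pos_of_lt hk1 (by omega))⟩
    calc p * j + k < p * (j + 1) := by rw [mul_add, mul_one]; omega
      _ ≤ p * (n + 1) := Nat.mul_le_mul_left p hj
  · intro x ⟨hx, hpx⟩
    refine ⟨(Nat.div_lt_iff_lt_mul hp).mpr (by rwa [mul_comm]), ?_, ?_⟩
    · exact Nat.pos_of_ne_zero fun h => hpx (Nat.dvd_of_mod_eq_zero h)
    · have := Nat.mod_lt x hp
      omega
  · rintro j k ⟨-, hk1, hkp⟩
    rw [Nat.mul_add_div hp, Nat.div_eq_of_lt (by omega), Nat.mul_add_mod,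
      Nat.mod_eq_of_lt (by omega), add_zero]
  · exact fun x _ => Nat.div_add_mod x p
  · exact fun _ _ _ => trivial

theorem natDegree_borweinPoly_one_lt {p : ℕ} (hp : 3 ≤ p) (n : ℕ) :
    (borweinPoly p 1 n).natDegree < (borweinDeg p 1 n + 1) * (p * (n + 1)) := by
  set N := p * (n + 1)
  have hdeg : (borweinPoly p 1 n).natDegree ≤ N * N := by
    rw [borweinPoly_one_eq_prod (by omega)]
    calc _ ≤ ∑ x ∈ (range N).filter (¬ p ∣ ·), (1 - X ^ x : ℤ[X]).natDegree :=
          natDegree_prod_le _ _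
      _ ≤ ∑ _x ∈ (range N).filter (¬ p ∣ ·), N := sum_le_sum fun x hx => by
          rw [mem_filter, mem_range] at hx
          refine (natDegree_sub_le _ _).trans ?_
          simp only [natDegree_one, natDegree_X_pow]
          omega
      _ ≤ N * N := by
          rw [sum_const, smul_eq_mul]
          exact Nat.mul_le_mul_right N (card_filter_le _ _ |>.trans (card_range N).le)
  have hN : N ≤ borweinDeg p 1 n := by
    obtain ⟨q, rfl⟩ : ∃ q, p = q + 3 := ⟨p - 3, by omega⟩
    rw [borweinDeg, Nat.le_div_iff_mul_le two_pos, show q + 3 - 1 = q + 2 by omega]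
    simp only [N]
    nlinarith [Nat.zero_le (q * n)]
  calc (borweinPoly p 1 n).natDegree ≤ N * N := hdeg
    _ ≤ borweinDeg p 1 n * N := Nat.mul_le_mul_right N hN
    _ < (borweinDeg p 1 n + 1) * N := by
      rw [add_one_mul]
      exact Nat.lt_add_of_pos_right (Nat.mul_pos (by omega) (by omega))

theorem cast_mul_borweinM_eq_sum [CharZero R] {p n b : ℕ} (hp : 3 ≤ p) (hb : b < p * (n + 1))
    {ω : R} (hω : IsPrimitiveRoot ω (p * (n + 1))) :
    ((p * (n + 1) : ℕ) : R) * borweinM p 1 n b =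
      ∑ d ∈ range (p * (n + 1)), (ω ^ d) ^ (p * (n + 1) - b) *
        if (p * (n + 1)).gcd d ∣ n + 1 then (p : R) ^ (p * (n + 1)).gcd d else 0 := by
  set P := (borweinPoly p 1 n).map (Int.castRingHom R)
  have hdeg : P.natDegree < (borweinDeg p 1 n + 1) * (p * (n + 1)) :=
    natDegree_map_le.trans_lt (natDegree_borweinPoly_one_lt hp n)
  have hroot (d : ℕ) : (ω ^ d) ^ (p * (n + 1)) = 1 := by
    rw [← pow_mul, mul_comm, pow_mul, hω.pow_eq_one, one_pow]
  have heval (d : ℕ) : P.eval (ω ^ d) =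
      if (p * (n + 1)).gcd d ∣ n + 1 then (p : R) ^ (p * (n + 1)).gcd d else 0 := by
    rw [← hω.prod_one_sub_pow_pow_filter_not_dvd (by omega) n.succ_pos]
    simp [P, borweinPoly_one_eq_prod (by omega : 0 < p), Polynomial.map_prod, eval_prod]
  calc ((p * (n + 1) : ℕ) : R) * borweinM p 1 n b
      = (p * (n + 1) : ℕ) *
          ∑ l ∈ range (borweinDeg p 1 n + 1), P.coeff (b + l * (p * (n + 1))) := by
        simp only [borweinM, borweinCoeff, P, coeff_map, Int.cast_sum, eq_intCast]
    _ = ∑ d ∈ range (p * (n + 1)), (ω ^ d) ^ (p * (n + 1) - b) * ∑ r ∈ range (p * (n + 1)),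
          (∑ l ∈ range (borweinDeg p 1 n + 1), P.coeff (r + l * (p * (n + 1)))) * (ω ^ d) ^ r :=
        (hω.sum_pow_sub_mul_sum hb fun r => ∑ l ∈ range _, P.coeff (r + l * _)).symm
    _ = _ := sum_congr rfl fun d _ => by rw [← eval_eq_sum_range_residue hdeg (hroot d), heval]

end RootsOfUnity

theorem gcd_mul_le_div_two {p m d : ℕ} (hp : 1 < p) (hm : 0 < m) (hd : d < p * m)
    (hdS : ∀ j, 0 < j → j < p → j * m ≠ d) (hg : (p * m).gcd d ∣ m) :
    (p * m).gcd d ≤ m / 2 := by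
  refine Nat.le_div_two_of_dvd_of_ne hm hg fun hgm => ?_
  obtain ⟨j, rfl⟩ : m ∣ d := hgm ▸ Nat.gcd_dvd_right _ _
  rcases j.eq_zero_or_pos with rfl | hj
  · rw [mul_zero, Nat.gcd_zero_right] at hgm
    exact absurd hgm (by nlinarith)
  · exact hdS j hj (lt_of_mul_lt_mul_right (by linarith) hm.le) (mul_comm j m)

theorem abs_cast_mul_borweinM_sub_le {p n b : ℕ} (hp : p.Prime) (hp3 : 3 ≤ p)
    (hb : b < p * (n + 1)) (hpb : p ∣ b) :
    |((p * (n + 1) : ℕ) : ℝ) * borweinM p 1 n b - (p - 1) * p ^ (n + 1)| ≤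
      (p * (n + 1) : ℕ) * p ^ ((n + 1) / 2) := by
  obtain ⟨ω, hω⟩ : ∃ ω : ℂ, IsPrimitiveRoot ω (p * (n + 1)) :=
    ⟨_, Complex.isPrimitiveRoot_exp _ (Nat.mul_pos hp.pos n.succ_pos).ne'⟩
  have key := cast_mul_borweinM_eq_sum hp3 hb hω
  set m := n + 1 with hm
  set t : ℕ → ℂ := fun d => (ω ^ d) ^ (p * m - b) *
    if (p * m).gcd d ∣ m then (p : ℂ) ^ (p * m).gcd d else 0
  set S := (Ioo 0 p).image (· * m)
  have hS : S ⊆ range (p * m) := by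
    intro d hd
    obtain ⟨j, hj, rfl⟩ := mem_image.mp hd
    rw [mem_Ioo] at hj
    exact mem_range.mpr (Nat.mul_lt_mul_of_pos_right hj.2 (by omega))
  have hSsum : ∑ d ∈ S, t d = (p - 1) * p ^ m := by
    have special (j : ℕ) (hj : j ∈ Ioo 0 p) : t (j * m) = p ^ m := by
      rw [mem_Ioo] at hj
      have hgcd : (p * m).gcd (j * m) = m := by
        rw [Nat.gcd_mul_right, (hp.coprime_iff_not_dvd.mpr (Nat.not_dvd_of_pos_of_lt hj.1 hj.2)),
          one_mul]
      simp only [t, hgcd, dvd_refl, if_true, pow_mul_sub_eq_one hω.pow_eq_one hpb, one_mul]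
    rw [sum_image fun _ _ _ _ h => Nat.eq_of_mul_eq_mul_right (by omega) h, sum_congr rfl special,
      sum_const, Nat.card_Ioo, nsmul_eq_mul, Nat.cast_sub (by omega : 1 ≤ p - 0), Nat.sub_zero]
    push_cast
    ring
  have hterm (d : ℕ) (hd : d ∈ range (p * m) \ S) : ‖t d‖ ≤ (p : ℝ) ^ (m / 2) := by
    rw [mem_sdiff, mem_range, mem_image, not_exists] at hd
    have hdS (j : ℕ) (hj0 : 0 < j) (hjp : j < p) : j * m ≠ d := fun h =>
      hd.2 j ⟨mem_Ioo.mpr ⟨hj0, hjp⟩, h⟩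
    simp only [t, norm_mul, norm_pow, hω.norm'_eq_one (Nat.mul_pos hp.pos (by omega)).ne',
      one_pow, one_mul]
    split_ifs with hg
    · rw [norm_pow, Complex.norm_natCast]
      exact pow_le_pow_right₀ (by exact_mod_cast hp.one_lt.le)
        (gcd_mul_le_div_two hp.one_lt (by omega) hd.1 hdS hg)
    · rw [norm_zero]
      positivity
  have hrest : ‖∑ d ∈ range (p * m) \ S, t d‖ ≤ (p * m : ℕ) * p ^ (m / 2) :=
    calc ‖∑ d ∈ range (p * m) \ S, t d‖ ≤ ∑ d ∈ range (p * m) \ S, ‖t d‖ := norm_sum_le _ _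
      _ ≤ ∑ _d ∈ range (p * m) \ S, (p : ℝ) ^ (m / 2) := sum_le_sum hterm
      _ ≤ (p * m : ℕ) * p ^ (m / 2) := by
        rw [sum_const, nsmul_eq_mul]
        gcongr
        exact_mod_cast (card_le_card sdiff_subset).trans (card_range _).le
  rw [← sum_sdiff hS, hSsum] at key
  have hreal : (((p * m : ℕ) * borweinM p 1 n b - (p - 1) * p ^ m : ℝ) : ℂ) =
      ∑ d ∈ range (p * m) \ S, t d := by
    push_cast at key ⊢
    linear_combination key
  rwa [← Real.norm_eq_abs, ← Complex.norm_real, hreal]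

theorem five_mul_mul_pow_div_two_lt (m : ℕ) : (5 * m : ℝ) * 5 ^ (m / 2) < 4 * 5 ^ m := by
  obtain ⟨k, hk⟩ : ∃ k, m = m / 2 + k := ⟨m - m / 2, by omega⟩
  have hbern : 1 + k * 4 ≤ (5 : ℝ) ^ k := by
    have := one_add_mul_le_pow (by norm_num : (-2 : ℝ) ≤ 4) k
    norm_num at this
    exact this
  have hmk : (m : ℝ) ≤ 2 * k := by exact_mod_cast (by omega : m ≤ 2 * k)
  calc (5 * m : ℝ) * 5 ^ (m / 2) < 4 * 5 ^ k * 5 ^ (m / 2) :=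
        mul_lt_mul_of_pos_right (by linarith) (by positivity)
    _ = 4 * 5 ^ m := by rw [mul_assoc, ← pow_add, add_comm, ← hk]

theorem stmt_6_general (n b : ℕ) (hb : b < 5 * (n + 1)) (hdvd : 5 ∣ b) :
    0 < borweinM 5 1 n b := by
  have herr := abs_cast_mul_borweinM_sub_le Nat.prime_five (by norm_num) hb hdvd
  have hgap := five_mul_mul_pow_div_two_lt (n + 1)
  push_cast at herr hgap
  have hNM : (0 : ℝ) < 5 * (n + 1) * borweinM 5 1 n b := by
    linarith [(abs_le.mp herr).1]
  exact_mod_cast pos_of_mul_pos_right hNM (by positivity)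

theorem stmt_6 (n b : ℕ) (hn : 1 ≤ n) (hb : b < 5 * (n + 1)) (hdvd : 5 ∣ b) :
    0 < borweinM 5 1 n b :=
  stmt_6_general n b hb hdvd
end
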